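/- Let (Ω, P) be a probability space, d ≥ 2, let E be an exponential random variable with rate 1, and let T = (T_1,…,T_d) be an R^d-valued random vector independent of E. Define Z_j = E + T_j - max_i T_i, let F_j(z) = P(Z_j ≤ z), let F_j^{-1}(q) = inf{z ∈ R : F_j(z) ≥ q}, and let q* = inf{q ∈ (0,1) : F_j^{-1}(q) > 0 for all j = 1,…,d}. Set V_j = exp(T_j - max_i T_i) / E[exp(T_j - max_i T_i)]. Then for every q ∈ (q*, 1), P(Z_j > F_j^{-1}(q) for some j ∈ {1,…,d}) / (1 - q) = E[max_j V_j]; in particular ω_{1:d} = lim_{q→1⁻} P(Z_j > F_j^{-1}(q) for some j)/(1-q) exists and equals E[max_j V_j]. -/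

import Mathlib

open MeasureTheory ProbabilityTheory

/-- The (right-continuous) distribution function of a real random variable `Z` under `P`. -/
noncomputable def distFun {Ω : Type*} [MeasurableSpace Ω]
    (P : Measure Ω) (Z : Ω → ℝ) (z : ℝ) : ℝ :=
  (P {ω | Z ω ≤ z}).toReal

/-- The generalized inverse (quantile function) `F⁻¹(q) = inf {z : F(z) ≥ q}`. -/
noncomputable def quantileFun {Ω : Type*} [MeasurableSpace Ω]
    (P : Measure Ω) (Z : Ω → ℝ) (q : ℝ) : ℝ :=
  sInf {z : ℝ | q ≤ distFun P Z z}

/-!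
Conditioning on `T`, a nonnegative `Y = g(T)` is exceeded by `E` with probability `E[exp(-Y)]`.
With `W_j = T_j - max T ≤ 0` and `c_j = E[exp W_j]`, each margin `Z_j = E + W_j` therefore has
the exact tail `P(Z_j > z) = c_j e^{-z}` for `z ≥ 0`: its `q`-quantile is
`u_j = log (c_j / (1 - q))`, positive exactly when `q > 1 - c_j`, so `q* = max_j (1 - c_j)`.
For `q > q*` the union of the exceedances is `{E > min_j (u_j - W_j)}`, of probability
`E[max_j exp(W_j - u_j)] = (1 - q) E[max_j V_j]`. The ratio is constant on `(q*, 1)`, which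
gives the limit.
-/

open Real Finset

section Quantile

variable {Ω : Type*} [MeasurableSpace Ω] {P : Measure Ω}

lemma quantileFun_nonpos_of_le_distFun_zero (Z : Ω → ℝ) {q : ℝ} (hq : q ≤ distFun P Z 0) :
    quantileFun P Z q ≤ 0 := by
  by_cases hb : BddBelow {z : ℝ | q ≤ distFun P Z z}
  · exact csInf_le hb hq
  · rw [quantileFun, csInf_of_not_bddBelow hb, Real.sInf_empty]

variable [IsFiniteMeasure P]

lemma monotone_distFun (Z : Ω → ℝ) : Monotone (distFun P Z) :=
  fun _ _ hab => ENNReal.toReal_mono (measure_ne_top _ _)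
    (measure_mono fun _ hω => le_trans hω hab)

variable {Z : Ω → ℝ} {c : ℝ}

lemma quantileFun_eq_log_of_distFun_eq (hF : ∀ z, 0 ≤ z → distFun P Z z = 1 - exp (-z) * c)
    (hc : 0 < c) {q : ℝ} (hcq : 1 - c < q) (hq : q < 1) :
    quantileFun P Z q = log (c / (1 - q)) := by
  have h1q : 0 < 1 - q := by linarith
  set u := log (c / (1 - q))
  have hu : 0 < u := log_pos ((one_lt_div h1q).mpr (by linarith))
  have hFu : distFun P Z u = q := by
    rw [hF u hu.le, exp_neg, exp_log (div_pos hc h1q), inv_div, div_mul_cancel₀ _ hc.ne']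
    ring
  have hlb : ∀ z, q ≤ distFun P Z z → u ≤ z := by
    intro z hz
    by_contra! hzu
    have hlt : distFun P Z (max z 0) < q := by
      rw [hF _ (le_max_right z 0), ← hFu, hF u hu.le]
      gcongr
      exact max_lt hzu hu
    exact (((monotone_distFun Z) (le_max_left z 0)).trans_lt hlt).not_ge hz
  exact IsLeast.csInf_eq ⟨hFu.ge, hlb⟩

lemma quantileFun_pos_iff_of_distFun_eq (hF : ∀ z, 0 ≤ z → distFun P Z z = 1 - exp (-z) * c)
    (hc : 0 < c) {q : ℝ} (hq : q < 1) :
    0 < quantileFun P Z q ↔ 1 - c < q := by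
  refine ⟨fun hpos => ?_, fun hcq => ?_⟩
  · by_contra! hqc
    refine (quantileFun_nonpos_of_le_distFun_zero Z ?_).not_gt hpos
    simpa [hF 0 le_rfl] using hqc
  · rw [quantileFun_eq_log_of_distFun_eq hF hc hcq hq]
    exact log_pos ((one_lt_div (by linarith)).mpr (by linarith))

lemma sInf_setOf_quantileFun_pos {ι : Type*} [Fintype ι] (H : (univ : Finset ι).Nonempty)
    {Z : ι → Ω → ℝ} {c : ι → ℝ}
    (hF : ∀ j z, 0 ≤ z → distFun P (Z j) z = 1 - exp (-z) * c j)
    (hc : ∀ j, 0 < c j) :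
    sInf {q : ℝ | q ∈ Set.Ioo (0 : ℝ) 1 ∧ ∀ j, 0 < quantileFun P (Z j) q}
      = univ.sup' H (fun j => 1 - c j) := by
  set m := univ.sup' H (fun j => 1 - c j)
  have hm0 : 0 ≤ m := by
    obtain ⟨j, hj⟩ := H
    refine le_trans ?_ (le_sup' (fun j => 1 - c j) hj)
    have h0 : 0 ≤ distFun P (Z j) 0 := ENNReal.toReal_nonneg
    rwa [hF j 0 le_rfl, neg_zero, exp_zero, one_mul] at h0
  have hm1 : m < 1 := (sup'_lt_iff H).mpr fun j _ => by linarith [hc j]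
  have hset :
      {q : ℝ | q ∈ Set.Ioo (0 : ℝ) 1 ∧ ∀ j, 0 < quantileFun P (Z j) q} = Set.Ioo m 1 := by
    ext q
    simp only [Set.mem_ofPred_eq, Set.mem_Ioo]
    constructor
    · rintro ⟨⟨-, hq1⟩, hpos⟩
      refine ⟨(sup'_lt_iff H).mpr fun j _ => ?_, hq1⟩
      exact (quantileFun_pos_iff_of_distFun_eq (hF j) (hc j) hq1).mp (hpos j)
    · rintro ⟨hmq, hq1⟩
      refine ⟨⟨hm0.trans_lt hmq, hq1⟩, fun j => ?_⟩
      exact (quantileFun_pos_iff_of_distFun_eq (hF j) (hc j) hq1).mpr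
        ((le_sup' (fun j => 1 - c j) (mem_univ j)).trans_lt hmq)
  rw [hset, csInf_Ioo hm1]

end Quantile

section ExponentialTail

variable {Ω : Type*} [MeasurableSpace Ω] {P : Measure Ω} [IsProbabilityMeasure P]
  {E : Ω → ℝ}

lemma toReal_measure_lt_eq_integral_exp_neg (hE : Measurable E)
    (hExp : ∀ x : ℝ, 0 ≤ x → P {ω | x < E ω} = ENNReal.ofReal (exp (-x)))
    {Y : Ω → ℝ} (hY : Measurable Y) (hY0 : ∀ ω, 0 ≤ Y ω) (hIndep : IndepFun E Y P) :
    (P {ω | Y ω < E ω}).toReal = ∫ ω, exp (-Y ω) ∂P := by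
  have hs : MeasurableSet {p : ℝ × ℝ | p.1 < p.2} :=
    measurableSet_lt measurable_fst measurable_snd
  have hYE : P.map (fun ω => (Y ω, E ω)) = (P.map Y).prod (P.map E) :=
    (indepFun_iff_map_prod_eq_prod_map_map hY.aemeasurable hE.aemeasurable).mp hIndep.symm
  have hTail : Measurable fun y : ℝ => P.map E (Set.Ioi y) :=
    Antitone.measurable fun a b hab => measure_mono (Set.Ioi_subset_Ioi hab)
  have hlint : P {ω | Y ω < E ω} = ∫⁻ ω, ENNReal.ofReal (exp (-Y ω)) ∂P := by
    calc P {ω | Y ω < E ω} = P.map (fun ω => (Y ω, E ω)) {p : ℝ × ℝ | p.1 < p.2} := by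
          rw [Measure.map_apply (hY.prodMk hE) hs]; rfl
      _ = ∫⁻ y, P.map E (Set.Ioi y) ∂(P.map Y) := by rw [hYE, Measure.prod_apply hs]; rfl
      _ = ∫⁻ ω, P.map E (Set.Ioi (Y ω)) ∂P := lintegral_map hTail hY
      _ = ∫⁻ ω, ENNReal.ofReal (exp (-Y ω)) ∂P := by
          refine lintegral_congr fun ω => ?_
          rw [Measure.map_apply hE measurableSet_Ioi]
          exact hExp _ (hY0 ω)
  rw [hlint, integral_eq_lintegral_of_nonneg_ae (.of_forall fun ω => (exp_pos _).le)
    (by fun_prop)]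

lemma integral_exp_pos_of_nonpos {Y : Ω → ℝ} (hY : Measurable Y) (hY0 : ∀ ω, Y ω ≤ 0) :
    0 < ∫ ω, exp (Y ω) ∂P := by
  have hint : Integrable (fun ω => exp (Y ω)) P :=
    (integrable_const 1).mono' (by fun_prop) (.of_forall fun ω => by
      rw [norm_of_nonneg (exp_pos _).le]; exact exp_le_one_iff.mpr (hY0 ω))
  simpa [mgf] using mgf_pos (X := Y) (t := 1) (by simpa using hint)

lemma distFun_add_of_nonpos (hE : Measurable E)
    (hExp : ∀ x : ℝ, 0 ≤ x → P {ω | x < E ω} = ENNReal.ofReal (exp (-x)))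
    {Y : Ω → ℝ} (hY : Measurable Y) (hY0 : ∀ ω, Y ω ≤ 0) (hIndep : IndepFun E Y P)
    {z : ℝ} (hz : 0 ≤ z) :
    distFun P (fun ω => E ω + Y ω) z = 1 - exp (-z) * ∫ ω, exp (Y ω) ∂P := by
  have hcompl : {ω | E ω + Y ω ≤ z} = {ω | z - Y ω < E ω}ᶜ := by
    ext ω
    simp only [Set.mem_compl_iff, Set.mem_ofPred_eq, not_lt]
    constructor <;> intro h <;> linarith
  have hIndep' : IndepFun E (fun ω => z - Y ω) P := hIndep.comp measurable_id (by fun_prop)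
  rw [distFun, hcompl, ← measureReal_def,
    probReal_compl_eq_one_sub (measurableSet_lt (by fun_prop) hE),
    measureReal_def, toReal_measure_lt_eq_integral_exp_neg hE hExp (by fun_prop)
      (fun ω => by linarith [hY0 ω]) hIndep', ← integral_const_mul]
  simp_rw [← exp_add, neg_sub, sub_eq_neg_add]

lemma toReal_measure_exists_lt_add_eq_integral_sup' {ι : Type*} [Fintype ι]
    (H : (univ : Finset ι).Nonempty) (hE : Measurable E)
    (hExp : ∀ x : ℝ, 0 ≤ x → P {ω | x < E ω} = ENNReal.ofReal (exp (-x)))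
    {W : Ω → ι → ℝ} (hW : Measurable W) (hW0 : ∀ ω j, W ω j ≤ 0)
    (hIndep : IndepFun E W P)
    {u : ι → ℝ} (hu : ∀ j, 0 ≤ u j) :
    (P {ω | ∃ j, u j < E ω + W ω j}).toReal
      = ∫ ω, univ.sup' H (fun j => exp (W ω j - u j)) ∂P := by
  set Y : Ω → ℝ := fun ω => -univ.sup' H (fun j => W ω j - u j)
  have hY : Measurable Y := by fun_prop
  have hY0 : ∀ ω, 0 ≤ Y ω := fun ω =>
    neg_nonneg.mpr (sup'_le H _ fun j _ => by linarith [hW0 ω j, hu j])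
  have hset : {ω | ∃ j, u j < E ω + W ω j} = {ω | Y ω < E ω} := by
    ext ω
    simp only [Set.mem_ofPred_eq, Y, neg_lt, lt_sup'_iff, mem_univ, true_and]
    exact exists_congr fun j => by constructor <;> intro h <;> linarith
  have hψ : Measurable fun w : ι → ℝ => -univ.sup' H (fun j => w j - u j) := by fun_prop
  have hIndepY : IndepFun E Y P := hIndep.comp measurable_id hψ
  rw [hset, toReal_measure_lt_eq_integral_exp_neg hE hExp hY hY0 hIndepY]
  simp only [Y, neg_neg]
  congr 1 with ω
  exact apply_sup'_eq_sup'_comp H exp fun x y => exp_monotone.map_max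

end ExponentialTail

theorem toReal_measure_exists_quantileFun_lt_div_eq {Ω ι : Type*} [MeasurableSpace Ω]
    {P : Measure Ω} [IsProbabilityMeasure P] [Fintype ι] (H : (univ : Finset ι).Nonempty)
    {E : Ω → ℝ} (hE : Measurable E)
    (hExp : ∀ x : ℝ, 0 ≤ x → P {ω | x < E ω} = ENNReal.ofReal (exp (-x)))
    {W : Ω → ι → ℝ} (hW : Measurable W) (hW0 : ∀ ω j, W ω j ≤ 0)
    (hIndep : IndepFun E W P)
    {q : ℝ} (hq : univ.sup' H (fun j => 1 - ∫ ω, exp (W ω j) ∂P) < q) (hq1 : q < 1) :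
    (P {ω | ∃ j, quantileFun P (fun ω => E ω + W ω j) q < E ω + W ω j}).toReal / (1 - q)
      = ∫ ω, univ.sup' H (fun j => exp (W ω j) / ∫ ω', exp (W ω' j) ∂P) ∂P := by
  set c : ι → ℝ := fun j => ∫ ω, exp (W ω j) ∂P
  have h1q : 0 < 1 - q := by linarith
  have hc : ∀ j, 0 < c j := fun j => integral_exp_pos_of_nonpos (by fun_prop) (hW0 · j)
  have hcq : ∀ j, 1 - c j < q := fun j => (le_sup' (fun j => 1 - c j) (mem_univ j)).trans_lt hq
  have hquantile : ∀ j, quantileFun P (fun ω => E ω + W ω j) q = log (c j / (1 - q)) := by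
    intro j
    refine quantileFun_eq_log_of_distFun_eq (fun z hz => ?_) (hc j) (hcq j) hq1
    exact distFun_add_of_nonpos hE hExp (by fun_prop) (hW0 · j)
      (hIndep.comp measurable_id (measurable_pi_apply j)) hz
  have hthreshold : ∀ j, 0 ≤ log (c j / (1 - q)) := fun j =>
    (log_pos ((one_lt_div h1q).mpr (by linarith [hcq j]))).le
  simp_rw [hquantile]
  rw [toReal_measure_exists_lt_add_eq_integral_sup' H hE hExp hW hW0 hIndep hthreshold,
    ← integral_div]
  congr 1 with ω
  rw [sup'_div₀ h1q.le]
  refine sup'_congr H rfl fun j _ => ?_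
  change _ = exp (W ω j) / c j
  rw [exp_sub, exp_log (div_pos (hc j) h1q)]
  field_simp

theorem union_exceedance_coefficient_omega
    {Ω : Type*} [MeasurableSpace Ω] (P : Measure Ω) [IsProbabilityMeasure P]
    (d : ℕ) (hd : 2 ≤ d)
    (E : Ω → ℝ) (T : Ω → Fin d → ℝ) (hE : Measurable E) (hT : Measurable T)
    (hExp : ∀ x : ℝ, 0 ≤ x → P {ω | x < E ω} = ENNReal.ofReal (Real.exp (-x)))
    (hIndep : IndepFun E T P)
    (Z : Fin d → Ω → ℝ)
    (hZ : Z = fun j ω => E ω + T ω j -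
      Finset.univ.sup' ⟨⟨0, by omega⟩, Finset.mem_univ _⟩ (T ω))
    (V : Fin d → Ω → ℝ)
    (hV : V = fun j ω =>
      Real.exp (T ω j - Finset.univ.sup' ⟨⟨0, by omega⟩, Finset.mem_univ _⟩ (T ω)) /
        ∫ ω', Real.exp (T ω' j -
          Finset.univ.sup' ⟨⟨0, by omega⟩, Finset.mem_univ _⟩ (T ω')) ∂P)
    (qstar : ℝ)
    (hqstar : qstar = sInf {q : ℝ | q ∈ Set.Ioo (0 : ℝ) 1 ∧
      ∀ j, 0 < quantileFun P (Z j) q}) :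
    (∀ q ∈ Set.Ioo qstar 1,
      (P {ω | ∃ j, quantileFun P (Z j) q < Z j ω}).toReal / (1 - q)
        = ∫ ω, Finset.univ.sup' ⟨⟨0, by omega⟩, Finset.mem_univ _⟩ (fun j => V j ω) ∂P) ∧
    Filter.Tendsto
      (fun q => (P {ω | ∃ j, quantileFun P (Z j) q < Z j ω}).toReal / (1 - q))
      (nhdsWithin 1 (Set.Iio 1))
      (nhds (∫ ω, Finset.univ.sup' ⟨⟨0, by omega⟩, Finset.mem_univ _⟩ (fun j => V j ω) ∂P)) := by
  set H : (univ : Finset (Fin d)).Nonempty := ⟨⟨0, by omega⟩, mem_univ _⟩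
  set W : Ω → Fin d → ℝ := fun ω j => T ω j - univ.sup' H (T ω)
  have hW : Measurable W := by fun_prop
  have hW0 : ∀ ω j, W ω j ≤ 0 := fun ω j => sub_nonpos.mpr (le_sup' (T ω) (mem_univ j))
  have hψ : Measurable fun t : Fin d → ℝ => fun j => t j - univ.sup' H t := by fun_prop
  have hIndepW : IndepFun E W P := hIndep.comp measurable_id hψ
  have hZW : Z = fun j ω => E ω + W ω j := by simp only [hZ, W, add_sub_assoc]
  have hc : ∀ j, 0 < ∫ ω, exp (W ω j) ∂P :=
    fun j => integral_exp_pos_of_nonpos (by fun_prop) (hW0 · j)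
  have hqstar' : qstar = univ.sup' H (fun j => 1 - ∫ ω, exp (W ω j) ∂P) :=
    hqstar.trans <| hZW ▸ sInf_setOf_quantileFun_pos H (fun j z hz =>
      distFun_add_of_nonpos hE hExp (by fun_prop) (hW0 · j)
        (hIndepW.comp measurable_id (measurable_pi_apply j)) hz) hc
  have hqstar1 : qstar < 1 := hqstar' ▸ (sup'_lt_iff H).mpr fun j _ => by linarith [hc j]
  have hratio := fun q (hq : q ∈ Set.Ioo qstar 1) =>
    toReal_measure_exists_quantileFun_lt_div_eq H hE hExp hW hW0 hIndepW (hqstar' ▸ hq.1) hq.2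
  subst hZW hV
  refine ⟨hratio, tendsto_const_nhds.congr' ?_⟩
  filter_upwards [Ioo_mem_nhdsLT hqstar1] with q hq using (hratio q hq).symm
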